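/- Under hypotheses (H1)–(H2), and assuming additionally that the map f ↦ (η^r[ρ_r(f)]·A^{i,ℓ}_{hp,r}(f)) is Lipschitz on bounded sets in the sense that |η^r[ρ_r(f)]A(f) − η^r[ρ_r(g)]A(g)| ≤ K‖f−g‖₁, there exists C₁ > 0 such that ‖J(f) − J(g)‖₁ ≤ C₁(‖f‖₁ + ‖g‖₁)‖f − g‖₁ for all f, g in the admissible bounded set. In the simplified case where η^r ≡ η⁰ is constant and A^{i,ℓ}_{hp,r} are constants in [0,1] summing to 1, prove directly that ‖J(f) − J(g)‖₁ ≤ 2η⁰Ln·(‖f‖₁ + ‖g‖₁)‖f − g‖₁. -/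
import Mathlib


open Finset

/-- Local Lipschitz estimate for the collision operator in the simplified case of a
constant encounter rate `η⁰` and a constant table of games with values in `[0,1]`
summing to `1`:
`‖J(f) − J(g)‖₁ ≤ 2η⁰Ln·(‖f‖₁ + ‖g‖₁)·‖f − g‖₁` for all states `f, g`. -/
theorem collision_operator_lipschitz_simplified (L n : ℕ) (hL : 1 ≤ L) (hn : 2 ≤ n)
    (η0 : ℝ) (hη0 : 0 < η0)
    (A : Fin n → Fin n → Fin L → Fin L → Fin n → ℝ)
    (hA_nonneg : ∀ h p r ℓ i, 0 ≤ A h p r ℓ i)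
    (hA_le : ∀ h p r ℓ i, A h p r ℓ i ≤ 1)
    (hA_sum : ∀ h p r, (∑ ℓ, ∑ i, A h p r ℓ i) = 1)
    (J : (Fin L → Fin n → ℝ) → Fin L → Fin n → ℝ)
    (hJ : ∀ f ℓ i, J f ℓ i =
      (∑ r, η0 * ∑ h, ∑ p, A h p r ℓ i * f r h * f r p)
        - η0 * f ℓ i * (∑ j, f ℓ j)) :
    ∀ f g : Fin L → Fin n → ℝ,
      (∑ ℓ, ∑ i, |J f ℓ i - J g ℓ i|)
        ≤ 2 * η0 * L * n * ((∑ ℓ, ∑ i, |f ℓ i|) + (∑ ℓ, ∑ i, |g ℓ i|))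
            * (∑ ℓ, ∑ i, |f ℓ i - g ℓ i|) := by
  intro f g
  set F := ∑ ℓ, ∑ i, |f ℓ i| with hFdef
  set G := ∑ ℓ, ∑ i, |g ℓ i| with hGdef
  set D := ∑ ℓ, ∑ i, |f ℓ i - g ℓ i| with hDdef
  have hF : 0 ≤ F := by positivity
  have hG : 0 ≤ G := by positivity
  have hD : 0 ≤ D := by positivity
  have rowF : ∀ r : Fin L, (∑ h, |f r h|) ≤ F :=
    fun r => Finset.single_le_sum (f := fun ℓ => ∑ i, |f ℓ i|)
      (fun ℓ _ => by positivity) (mem_univ r)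
  have rowG : ∀ r : Fin L, (∑ h, |g r h|) ≤ G :=
    fun r => Finset.single_le_sum (f := fun ℓ => ∑ i, |g ℓ i|)
      (fun ℓ _ => by positivity) (mem_univ r)
  have rowD : ∀ r : Fin L, (∑ h, |f r h - g r h|) ≤ D :=
    fun r => Finset.single_le_sum (f := fun ℓ => ∑ i, |f ℓ i - g ℓ i|)
      (fun ℓ _ => by positivity) (mem_univ r)
  -- key bound on the quadratic sums
  have hS : (∑ r, ∑ h, ∑ p, |f r h * f r p - g r h * g r p|) ≤ F * D + D * G := by
    have step1 : ∀ r : Fin L, (∑ h, ∑ p, |f r h * f r p - g r h * g r p|)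
        ≤ (∑ h, |f r h|) * D + (∑ h, |f r h - g r h|) * G := by
      intro r
      calc ∑ h, ∑ p, |f r h * f r p - g r h * g r p|
          ≤ ∑ h, ∑ p, (|f r h| * |f r p - g r p| + |f r h - g r h| * |g r p|) := by
            refine Finset.sum_le_sum fun h _ => Finset.sum_le_sum fun p _ => ?_
            calc |f r h * f r p - g r h * g r p|
                = |f r h * (f r p - g r p) + (f r h - g r h) * g r p| := by ring_nf
              _ ≤ |f r h * (f r p - g r p)| + |(f r h - g r h) * g r p| := abs_add_le _ _
              _ = |f r h| * |f r p - g r p| + |f r h - g r h| * |g r p| := by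
                  rw [abs_mul, abs_mul]
        _ = (∑ h, |f r h|) * (∑ p, |f r p - g r p|)
              + (∑ h, |f r h - g r h|) * (∑ p, |g r p|) := by
            rw [Finset.sum_mul_sum, Finset.sum_mul_sum, ← Finset.sum_add_distrib]
            exact Finset.sum_congr rfl fun h _ => Finset.sum_add_distrib
        _ ≤ (∑ h, |f r h|) * D + (∑ h, |f r h - g r h|) * G := by
            gcongr
            · exact rowD r
            · exact rowG r
    calc (∑ r, ∑ h, ∑ p, |f r h * f r p - g r h * g r p|)
        ≤ ∑ r, ((∑ h, |f r h|) * D + (∑ h, |f r h - g r h|) * G) :=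
          Finset.sum_le_sum fun r _ => step1 r
      _ = F * D + D * G := by
          rw [Finset.sum_add_distrib, ← Finset.sum_mul, ← Finset.sum_mul]
  -- pointwise bound
  have hpt : ∀ ℓ i, |J f ℓ i - J g ℓ i|
      ≤ η0 * (F * D + D * G) + η0 * (|f ℓ i| * D + |f ℓ i - g ℓ i| * G) := by
    intro ℓ i
    rw [hJ, hJ]
    have key : ((∑ r, η0 * ∑ h, ∑ p, A h p r ℓ i * f r h * f r p)
          - η0 * f ℓ i * (∑ j, f ℓ j))
        - ((∑ r, η0 * ∑ h, ∑ p, A h p r ℓ i * g r h * g r p)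
          - η0 * g ℓ i * (∑ j, g ℓ j))
        = ((∑ r, η0 * ∑ h, ∑ p, A h p r ℓ i * f r h * f r p)
            - (∑ r, η0 * ∑ h, ∑ p, A h p r ℓ i * g r h * g r p))
          + (-(η0 * f ℓ i * (∑ j, f ℓ j) - η0 * g ℓ i * (∑ j, g ℓ j))) := by ring
    rw [key]
    refine (abs_add_le _ _).trans ?_
    rw [abs_neg]
    have h1 : |(∑ r, η0 * ∑ h, ∑ p, A h p r ℓ i * f r h * f r p)
        - (∑ r, η0 * ∑ h, ∑ p, A h p r ℓ i * g r h * g r p)|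
        ≤ η0 * (F * D + D * G) := by
      have heq : (∑ r, η0 * ∑ h, ∑ p, A h p r ℓ i * f r h * f r p)
          - (∑ r, η0 * ∑ h, ∑ p, A h p r ℓ i * g r h * g r p)
          = ∑ r, η0 * ∑ h, ∑ p, A h p r ℓ i * (f r h * f r p - g r h * g r p) := by
        rw [← Finset.sum_sub_distrib]
        refine Finset.sum_congr rfl fun r _ => ?_
        rw [← mul_sub, ← Finset.sum_sub_distrib]
        congr 1
        refine Finset.sum_congr rfl fun h _ => ?_
        rw [← Finset.sum_sub_distrib]
        refine Finset.sum_congr rfl fun p _ => ?_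
        ring
      rw [heq]
      calc |∑ r, η0 * ∑ h, ∑ p, A h p r ℓ i * (f r h * f r p - g r h * g r p)|
          ≤ ∑ r, |η0 * ∑ h, ∑ p, A h p r ℓ i * (f r h * f r p - g r h * g r p)| :=
            Finset.abs_sum_le_sum_abs _ _
        _ ≤ ∑ r, η0 * ∑ h, ∑ p, |f r h * f r p - g r h * g r p| := by
            refine Finset.sum_le_sum fun r _ => ?_
            rw [abs_mul, abs_of_pos hη0]
            refine mul_le_mul_of_nonneg_left ?_ hη0.le
            calc |∑ h, ∑ p, A h p r ℓ i * (f r h * f r p - g r h * g r p)|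
                ≤ ∑ h, ∑ p, |A h p r ℓ i * (f r h * f r p - g r h * g r p)| :=
                  (Finset.abs_sum_le_sum_abs _ _).trans
                    (Finset.sum_le_sum fun h _ => Finset.abs_sum_le_sum_abs _ _)
              _ ≤ ∑ h, ∑ p, |f r h * f r p - g r h * g r p| := by
                  refine Finset.sum_le_sum fun h _ => Finset.sum_le_sum fun p _ => ?_
                  rw [abs_mul, abs_of_nonneg (hA_nonneg h p r ℓ i)]
                  exact mul_le_of_le_one_left (abs_nonneg _) (hA_le h p r ℓ i)
        _ = η0 * ∑ r, ∑ h, ∑ p, |f r h * f r p - g r h * g r p| := by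
            rw [Finset.mul_sum]
        _ ≤ η0 * (F * D + D * G) := mul_le_mul_of_nonneg_left hS hη0.le
    have h2 : |η0 * f ℓ i * (∑ j, f ℓ j) - η0 * g ℓ i * (∑ j, g ℓ j)|
        ≤ η0 * (|f ℓ i| * D + |f ℓ i - g ℓ i| * G) := by
      have heq : η0 * f ℓ i * (∑ j, f ℓ j) - η0 * g ℓ i * (∑ j, g ℓ j)
          = η0 * (f ℓ i * ((∑ j, f ℓ j) - (∑ j, g ℓ j))
              + (f ℓ i - g ℓ i) * (∑ j, g ℓ j)) := by ring
      rw [heq, abs_mul, abs_of_pos hη0]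
      refine mul_le_mul_of_nonneg_left ?_ hη0.le
      refine (abs_add_le _ _).trans ?_
      rw [abs_mul, abs_mul]
      have hρD : |(∑ j, f ℓ j) - (∑ j, g ℓ j)| ≤ D := by
        rw [← Finset.sum_sub_distrib]
        exact (Finset.abs_sum_le_sum_abs _ _).trans (rowD ℓ)
      have hρG : |∑ j, g ℓ j| ≤ G :=
        (Finset.abs_sum_le_sum_abs _ _).trans (rowG ℓ)
      exact add_le_add (mul_le_mul_of_nonneg_left hρD (abs_nonneg _))
        (mul_le_mul_of_nonneg_left hρG (abs_nonneg _))
    exact add_le_add h1 h2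
  -- sum the pointwise bound
  have hsum : (∑ ℓ, ∑ i, |J f ℓ i - J g ℓ i|)
      ≤ (L : ℝ) * n * (η0 * (F * D + D * G)) + η0 * (F * D + D * G) := by
    calc (∑ ℓ, ∑ i, |J f ℓ i - J g ℓ i|)
        ≤ ∑ ℓ, ∑ i, (η0 * (F * D + D * G)
            + η0 * (|f ℓ i| * D + |f ℓ i - g ℓ i| * G)) :=
          Finset.sum_le_sum fun ℓ _ => Finset.sum_le_sum fun i _ => hpt ℓ i
      _ = (L : ℝ) * n * (η0 * (F * D + D * G)) + η0 * (F * D + D * G) := by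
          simp only [Finset.sum_add_distrib, Finset.sum_const, Finset.card_univ,
            Fintype.card_fin, nsmul_eq_mul, mul_add, ← Finset.mul_sum,
            ← Finset.sum_mul]
          rw [← hFdef, ← hDdef]
          push_cast
          ring
  refine hsum.trans ?_
  have hLn : (1 : ℝ) ≤ (L : ℝ) * n := by
    have h1 : (1 : ℝ) ≤ (L : ℝ) := by exact_mod_cast hL
    have h2 : (1 : ℝ) ≤ (n : ℝ) := by
      have : (2 : ℝ) ≤ (n : ℝ) := by exact_mod_cast hn
      linarith
    nlinarith
  have hFDDG : 0 ≤ F * D + D * G := by positivity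
  nlinarith [mul_nonneg (mul_nonneg hη0.le hFDDG) (sub_nonneg.mpr hLn),
    mul_pos hη0 hη0]
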